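/- arXiv:2212.14259 — 4 statements merged into one kernel-verified Lean document; each statement's English description precedes it below -/
import Mathlib

section
/- Let 𝒳 be a convex subset of L⁰_c and 𝒞 ⊂ 𝒳 a non-empty 𝒫-sensitive set with reduction set 𝒬 ⊂ 𝔓_c(Ω). For Q ∈ 𝒬 put 𝒳_Q := j_Q(𝒳) and 𝒞_Q := j_Q(𝒞), let 𝒴_Q be a non-empty set of maps l : 𝒳_Q → ℝ ∪ {−∞,∞}, and define 𝒞°_Q := {l ∈ 𝒴_Q : l(X) ≤ 1 for all X ∈ 𝒞_Q} and 𝒞°°_Q := {X ∈ 𝒳_Q : l(X) ≤ 1 for all l ∈ 𝒞°_Q}. Set 𝒞° := ⋃_{Q∈𝒬} {l ∘ j_Q : l ∈ 𝒞°_Q} and 𝒞°° := {X ∈ 𝒳 : h(X) ≤ 1 for all h ∈ 𝒞°}. If 𝒞_Q = 𝒞°°_Q for all Q ∈ 𝒬, then 𝒞 = 𝒞°°. -/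
open MeasureTheory Filter Set
open scoped ENNReal

namespace Robust

variable {Ω : Type*} [MeasurableSpace Ω]

/-- `Q` vanishes on every `𝔓`-polar set, i.e. `Q ≪ 𝔓`. -/
def AC (𝔓 : Set (Measure Ω)) (Q : Measure Ω) : Prop :=
  ∀ N : Set Ω, MeasurableSet N → (∀ P ∈ 𝔓, P N = 0) → Q N = 0

/-- `𝔓_c(Ω)`: probability measures vanishing on all `𝔓`-polar sets. -/
def PC (𝔓 : Set (Measure Ω)) : Set (Measure Ω) :=
  {Q | IsProbabilityMeasure Q ∧ AC 𝔓 Q}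

/-- `𝔓`-quasi-sure equality of random variables. -/
def QSEq (𝔓 : Set (Measure Ω)) (f g : Ω → ℝ) : Prop := ∀ P ∈ 𝔓, f =ᵐ[P] g

/-- The `𝔓`-quasi-sure order. -/
def QSLe (𝔓 : Set (Measure Ω)) (f g : Ω → ℝ) : Prop := ∀ P ∈ 𝔓, f ≤ᵐ[P] g

/-- Representatives of elements of `L⁰`: the measurable functions. -/
def L0 (Ω : Type*) [MeasurableSpace Ω] : Set (Ω → ℝ) := {f | Measurable f}

/-- Representatives of elements of the positive cone `L⁰_{c+}`. -/
def L0pos (𝔓 : Set (Measure Ω)) : Set (Ω → ℝ) :=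
  {f | Measurable f ∧ QSLe 𝔓 (fun _ => 0) f}

/-- Representatives of elements of `L^∞_c`. -/
def Linf (𝔓 : Set (Measure Ω)) : Set (Ω → ℝ) :=
  {f | Measurable f ∧ ∃ m : ℝ, 0 < m ∧ QSLe 𝔓 (fun ω => |f ω|) (fun _ => m)}

/-- Representatives of elements of `L^∞_{c+}`. -/
def LinfPos (𝔓 : Set (Measure Ω)) : Set (Ω → ℝ) :=
  {f | f ∈ Linf 𝔓 ∧ QSLe 𝔓 (fun _ => 0) f}

/-- A set of functions representing a set of equivalence classes in `L⁰_c`: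
it consists of measurable functions and is saturated under `𝔓`-q.s. equality. -/
def IsL0Set (𝔓 : Set (Measure Ω)) (𝒞 : Set (Ω → ℝ)) : Prop :=
  𝒞 ⊆ L0 Ω ∧ ∀ f ∈ 𝒞, ∀ g : Ω → ℝ, Measurable g → QSEq 𝔓 f g → g ∈ 𝒞

/-- Function-level version of `j_Q⁻¹ (j_Q 𝒞)` (equivalently, of the subset `j_Q 𝒞` of `L⁰_Q`):
the `Q`-a.s. saturation of `𝒞`. -/
def jSat (Q : Measure Ω) (𝒞 : Set (Ω → ℝ)) : Set (Ω → ℝ) :=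
  {f | Measurable f ∧ ∃ g ∈ 𝒞, f =ᵐ[Q] g}

/-- `𝒬` is a reduction set for `𝒞`. -/
def IsReductionSet (𝔓 𝒬 : Set (Measure Ω)) (𝒞 : Set (Ω → ℝ)) : Prop :=
  𝒬.Nonempty ∧ 𝒬 ⊆ PC 𝔓 ∧ 𝒞 = ⋂ Q ∈ 𝒬, jSat Q 𝒞

/-- `𝒞` is `𝔓`-sensitive. -/
def Sensitive (𝔓 : Set (Measure Ω)) (𝒞 : Set (Ω → ℝ)) : Prop :=
  𝒞 = ⋂ Q ∈ PC 𝔓, jSat Q 𝒞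

/-- `𝒞` is `𝒬`-closed: closed under sequential convergence in `Q`-probability for all `Q ∈ 𝒬`
simultaneously. -/
def QClosedSet (𝒬 : Set (Measure Ω)) (𝒞 : Set (Ω → ℝ)) : Prop :=
  ∀ (X : ℕ → Ω → ℝ) (x : Ω → ℝ), (∀ n, X n ∈ 𝒞) → Measurable x →
    (∀ Q ∈ 𝒬, TendstoInMeasure Q X atTop x) → x ∈ 𝒞

/-- `𝒞` is locally `Q`-closed. -/
def LocallyQClosed (Q : Measure Ω) (𝒞 : Set (Ω → ℝ)) : Prop :=
  ∀ (X : ℕ → Ω → ℝ) (x : Ω → ℝ), (∀ n, X n ∈ 𝒞) → Measurable x →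
    TendstoInMeasure Q X atTop x → ∃ y ∈ 𝒞, x =ᵐ[Q] y

/-- `𝒞` is solid in `L⁰_c` (w.r.t. the quasi-sure order of `𝔓`). -/
def SolidL0 (𝔓 : Set (Measure Ω)) (𝒞 : Set (Ω → ℝ)) : Prop :=
  ∀ f ∈ 𝒞, ∀ g : Ω → ℝ, Measurable g →
    QSLe 𝔓 (fun ω => |g ω|) (fun ω => |f ω|) → g ∈ 𝒞

/-- `𝒞` is solid in `L⁰_{c+}`. -/
def SolidPos (𝔓 : Set (Measure Ω)) (𝒞 : Set (Ω → ℝ)) : Prop :=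
  𝒞 ⊆ L0pos 𝔓 ∧ ∀ f ∈ 𝒞, ∀ g ∈ L0pos 𝔓, QSLe 𝔓 g f → g ∈ 𝒞

/-- `𝒞` is solid (in either of the two senses). -/
def Solid (𝔓 : Set (Measure Ω)) (𝒞 : Set (Ω → ℝ)) : Prop :=
  SolidL0 𝔓 𝒞 ∨ SolidPos 𝔓 𝒞

/-- `f` is the infimum (greatest lower bound) of the family `Y` in the `𝔓`-q.s. order. -/
def IsQSInf (𝔓 : Set (Measure Ω)) {ι : Sort*} (Y : ι → Ω → ℝ) (f : Ω → ℝ) : Prop :=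
  (∀ a, QSLe 𝔓 f (Y a)) ∧
    ∀ g : Ω → ℝ, Measurable g → (∀ a, QSLe 𝔓 g (Y a)) → QSLe 𝔓 g f

/-- `f` is the supremum (least upper bound) of the family `Y` in the `𝔓`-q.s. order. -/
def IsQSSup (𝔓 : Set (Measure Ω)) {ι : Sort*} (Y : ι → Ω → ℝ) (f : Ω → ℝ) : Prop :=
  (∀ a, QSLe 𝔓 (Y a) f) ∧
    ∀ g : Ω → ℝ, Measurable g → (∀ a, QSLe 𝔓 (Y a) g) → QSLe 𝔓 f g

/-- Order convergence of a sequence in `L⁰_c`. -/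
def SeqOrderConv (𝔓 : Set (Measure Ω)) (X : ℕ → Ω → ℝ) (x : Ω → ℝ) : Prop :=
  ∃ Y : ℕ → Ω → ℝ, (∀ n, Measurable (Y n)) ∧
    (∀ m n : ℕ, m ≤ n → QSLe 𝔓 (Y n) (Y m)) ∧
    IsQSInf 𝔓 Y (fun _ => 0) ∧
    ∀ n, QSLe 𝔓 (fun ω => |X n ω - x ω|) (Y n)

/-- `𝒞` is sequentially order closed. -/
def SeqOrderClosed (𝔓 : Set (Measure Ω)) (𝒞 : Set (Ω → ℝ)) : Prop :=
  ∀ (X : ℕ → Ω → ℝ) (x : Ω → ℝ), (∀ n, X n ∈ 𝒞) → Measurable x →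
    SeqOrderConv 𝔓 X x → x ∈ 𝒞

/-- Order convergence of a net in `L⁰_c`. -/
def NetOrderConv (𝔓 : Set (Measure Ω)) {ι : Type*} [Preorder ι]
    (X : ι → Ω → ℝ) (x : Ω → ℝ) : Prop :=
  ∃ Y : ι → Ω → ℝ, (∀ a, Measurable (Y a)) ∧
    (∀ a b : ι, a ≤ b → QSLe 𝔓 (Y b) (Y a)) ∧
    IsQSInf 𝔓 Y (fun _ => 0) ∧
    ∀ a, QSLe 𝔓 (fun ω => |X a ω - x ω|) (Y a)

/-- `𝒞` is order closed (w.r.t. order convergence of nets). -/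
def OrderClosed (𝔓 : Set (Measure Ω)) (𝒞 : Set (Ω → ℝ)) : Prop :=
  ∀ (ι : Type*) [Preorder ι] [IsDirected ι (· ≤ ·)] [Nonempty ι],
    ∀ (X : ι → Ω → ℝ) (x : Ω → ℝ), (∀ a, X a ∈ 𝒞) → Measurable x →
      NetOrderConv 𝔓 X x → x ∈ 𝒞

/-- Order convergence of all (directed) nets is preserved under `j_Q`. -/
def NetOrderConvTransfer (𝔓 : Set (Measure Ω)) (Q : Measure Ω) : Prop :=
  ∀ (ι : Type*) [Preorder ι] [IsDirected ι (· ≤ ·)] [Nonempty ι],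
    ∀ (X : ι → Ω → ℝ) (x : Ω → ℝ), (∀ a, Measurable (X a)) → Measurable x →
      NetOrderConv 𝔓 X x → NetOrderConv {Q} X x

/-- A measure is supported (relative to the `𝔓`-polar sets). -/
def SupportedMeasure (𝔓 : Set (Measure Ω)) (μ : Measure Ω) : Prop :=
  ∃ S : Set Ω, MeasurableSet S ∧ μ Sᶜ = 0 ∧
    ∀ N : Set Ω, MeasurableSet N → μ (N ∩ S) = 0 → ∀ P ∈ 𝔓, P (N ∩ S) = 0

/-- The (possibly infinite) expectation `E_Q[f]` of a (q.s.) non-negative random variable. -/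
noncomputable def EExp (Q : Measure Ω) (f : Ω → ℝ) : ℝ≥0∞ :=
  ∫⁻ ω, ENNReal.ofReal (f ω) ∂Q

/-- The polar `𝒞°_𝒬` of `𝒞` consisting of pairs `(Q, Z)` with `Q ∈ 𝒬` and `Z` in the
set `Zs` of dual test functions (e.g. `L^∞_{c+}` or `L⁰_{c+}`). -/
def polarPairs (𝒬 : Set (Measure Ω)) (Zs 𝒞 : Set (Ω → ℝ)) :
    Set (Measure Ω × (Ω → ℝ)) :=
  {p | p.1 ∈ 𝒬 ∧ p.2 ∈ Zs ∧ ∀ f ∈ 𝒞, EExp p.1 (fun ω => p.2 ω * f ω) ≤ 1}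

/-- The bipolar `𝒞°°_𝒬` of `𝒞`. -/
def bipolarPairs (𝔓 𝒬 : Set (Measure Ω)) (Zs 𝒞 : Set (Ω → ℝ)) : Set (Ω → ℝ) :=
  {f | f ∈ L0pos 𝔓 ∧ ∀ p ∈ polarPairs 𝒬 Zs 𝒞, EExp p.1 (fun ω => p.2 ω * f ω) ≤ 1}

/-- The polar `𝒞^*_𝒬` with a uniform (supremum) constraint. -/
def starPolar (𝔓 𝒬 : Set (Measure Ω)) (𝒞 : Set (Ω → ℝ)) : Set (Ω → ℝ) :=
  {Z | Z ∈ LinfPos 𝔓 ∧ ∀ f ∈ 𝒞, (⨆ Q ∈ 𝒬, EExp Q fun ω => Z ω * f ω) ≤ 1}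

/-- The bipolar `𝒞^{**}_𝒬` with a uniform (supremum) constraint. -/
def starBipolar (𝔓 𝒬 : Set (Measure Ω)) (𝒞 : Set (Ω → ℝ)) : Set (Ω → ℝ) :=
  {f | f ∈ L0pos 𝔓 ∧ ∀ Z ∈ starPolar 𝔓 𝒬 𝒞, (⨆ Q ∈ 𝒬, EExp Q fun ω => Z ω * f ω) ≤ 1}

/-- `ca_c`: finite signed measures vanishing on all `𝔓`-polar sets. -/
def CAc (𝔓 : Set (Measure Ω)) : Set (SignedMeasure Ω) :=
  {ν | ∀ N : Set Ω, MeasurableSet N → (∀ P ∈ 𝔓, P N = 0) → ν.totalVariation N = 0}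

/-- A signed measure is supported if its total variation is. -/
def SupportedSigned (𝔓 : Set (Measure Ω)) (ν : SignedMeasure Ω) : Prop :=
  SupportedMeasure 𝔓 ν.totalVariation

/-- `sca_c`: supported signed measures in `ca_c`. -/
def SCAc (𝔓 : Set (Measure Ω)) : Set (SignedMeasure Ω) :=
  {ν | ν ∈ CAc 𝔓 ∧ SupportedSigned 𝔓 ν}

/-- A signed measure is non-negative. -/
def nonnegSM (ν : SignedMeasure Ω) : Prop := ∀ N : Set Ω, MeasurableSet N → 0 ≤ ν N

/-- The measure associated to a non-negative signed measure (its Jordan positive part). -/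
noncomputable def posMeas (ν : SignedMeasure Ω) : Measure Ω :=
  ν.toJordanDecomposition.posPart

/-- The pairing `∫ f dν` of a function with a signed measure. -/
noncomputable def pairSM (ν : SignedMeasure Ω) (f : Ω → ℝ) : ℝ :=
  ∫ ω, f ω ∂ν.toJordanDecomposition.posPart - ∫ ω, f ω ∂ν.toJordanDecomposition.negPart

/-- The total variation `|ν|` of a signed measure, as a signed measure. -/
noncomputable def tvSigned (ν : SignedMeasure Ω) : SignedMeasure Ω :=
  ν.toJordanDecomposition.posPart.toSignedMeasure +
    ν.toJordanDecomposition.negPart.toSignedMeasure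

/-- `𝔓` is of class (S). -/
def ClassS (𝔓 : Set (Measure Ω)) : Prop :=
  ∃ 𝒬 : Set (Measure Ω), 𝒬 ⊆ PC 𝔓 ∧ (∀ Q ∈ 𝒬, SupportedMeasure 𝔓 Q) ∧
    ∀ N : Set Ω, MeasurableSet N → ((∀ P ∈ 𝔓, P N = 0) ↔ ∀ Q ∈ 𝒬, Q N = 0)

/-- The polar `𝒞°_{ca}` of `𝒞 ⊂ L⁰_{c+}` inside `ca_{c+}` (non-negative members of `ca_c`). -/
def polarCA (𝔓 : Set (Measure Ω)) (𝒞 : Set (Ω → ℝ)) : Set (SignedMeasure Ω) :=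
  {ν | nonnegSM ν ∧ ν ∈ CAc 𝔓 ∧ ∀ f ∈ 𝒞, EExp (posMeas ν) f ≤ 1}

/-- The bipolar `𝒞°°_{ca}`. -/
def bipolarCA (𝔓 : Set (Measure Ω)) (𝒞 : Set (Ω → ℝ)) : Set (Ω → ℝ) :=
  {f | f ∈ L0pos 𝔓 ∧ ∀ ν ∈ polarCA 𝔓 𝒞, EExp (posMeas ν) f ≤ 1}

/-- The polar `𝒞°_{sca}` of `𝒞 ⊂ L⁰_{c+}` inside `sca_{c+}`. -/
def polarSCA (𝔓 : Set (Measure Ω)) (𝒞 : Set (Ω → ℝ)) : Set (SignedMeasure Ω) :=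
  {ν | nonnegSM ν ∧ ν ∈ SCAc 𝔓 ∧ ∀ f ∈ 𝒞, EExp (posMeas ν) f ≤ 1}

/-- The bipolar `𝒞°°_{sca}`. -/
def bipolarSCA (𝔓 : Set (Measure Ω)) (𝒞 : Set (Ω → ℝ)) : Set (Ω → ℝ) :=
  {f | f ∈ L0pos 𝔓 ∧ ∀ ν ∈ polarSCA 𝔓 𝒞, EExp (posMeas ν) f ≤ 1}

/-- The weak topology `σ(M, L^∞_c)` on a set `M` of signed measures. -/
noncomputable def sigmaTop (𝔓 : Set (Measure Ω)) (M : Set (SignedMeasure Ω)) :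
    TopologicalSpace M :=
  TopologicalSpace.induced
    (fun ν : M => fun X : Linf 𝔓 => pairSM ν.1 X.1) inferInstance

/-- The weak topology `σ(𝒳, 𝒴)` on `𝒳 ⊂ L⁰_c` induced by a set `𝒴` of signed measures. -/
noncomputable def sigmaTopDual (𝒳 : Set (Ω → ℝ)) (𝒴 : Set (SignedMeasure Ω)) :
    TopologicalSpace 𝒳 :=
  TopologicalSpace.induced
    (fun f : 𝒳 => fun ν : 𝒴 => pairSM ν.1 f.1) inferInstance

/-- `𝒞` is `𝒬`-stable: it contains every `𝒬`-aggregator of every `𝒬`-coherent family in `𝒞`. -/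
def QStable (𝒬 : Set (Measure Ω)) (𝒞 : Set (Ω → ℝ)) : Prop :=
  ∀ X : Measure Ω → Ω → ℝ, (∀ Q ∈ 𝒬, X Q ∈ 𝒞) →
    ∀ x : Ω → ℝ, Measurable x → (∀ Q ∈ 𝒬, X Q =ᵐ[Q] x) → x ∈ 𝒞

theorem subset_jSat {Q : Measure Ω} {𝒳 : Set (Ω → ℝ)} (h𝒳 : 𝒳 ⊆ L0 Ω) : 𝒳 ⊆ jSat Q 𝒳 :=
  fun f hf => ⟨h𝒳 hf, f, hf, EventuallyEq.rfl⟩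

theorem IsReductionSet.mem_iff {𝔓 𝒬 : Set (Measure Ω)} {𝒞 : Set (Ω → ℝ)}
    (hred : IsReductionSet 𝔓 𝒬 𝒞) {f : Ω → ℝ} : f ∈ 𝒞 ↔ ∀ Q ∈ 𝒬, f ∈ jSat Q 𝒞 :=
  (Set.ext_iff.mp hred.2.2 f).trans Set.mem_iInter₂

theorem stmt3_general {Ω : Type*} [MeasurableSpace Ω]
    (𝔓 : Set (Measure Ω))
    (𝒳 : Set (Ω → ℝ)) (h𝒳L0 : IsL0Set 𝔓 𝒳)
    (𝒞 : Set (Ω → ℝ)) (h𝒞𝒳 : 𝒞 ⊆ 𝒳)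
    (𝒬 : Set (Measure Ω)) (hred : IsReductionSet 𝔓 𝒬 𝒞)
    (𝒴 : Measure Ω → Set ((Ω → ℝ) → EReal))
    (hbip : ∀ Q ∈ 𝒬,
        jSat Q 𝒞 = {f | f ∈ jSat Q 𝒳 ∧
          ∀ l ∈ 𝒴 Q, (∀ g ∈ jSat Q 𝒞, l g ≤ 1) → l f ≤ 1}) :
    𝒞 = {f | f ∈ 𝒳 ∧
      ∀ Q ∈ 𝒬, ∀ l ∈ 𝒴 Q, (∀ g ∈ jSat Q 𝒞, l g ≤ 1) → l f ≤ 1} := by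
  ext f
  constructor
  · intro hf
    exact ⟨h𝒞𝒳 hf, fun Q _ l _ hpol => hpol f (subset_jSat (h𝒞𝒳.trans h𝒳L0.1) hf)⟩
  · rintro ⟨hf𝒳, hpol⟩
    refine hred.mem_iff.mpr fun Q hQ => ?_
    rw [hbip Q hQ]
    exact ⟨subset_jSat h𝒳L0.1 hf𝒳, hpol Q hQ⟩

/-- Lifting bipolar representations. -/
theorem stmt3 {Ω : Type*} [MeasurableSpace Ω]
    (𝔓 : Set (Measure Ω)) (h𝔓ne : 𝔓.Nonempty)
    (h𝔓prob : ∀ P ∈ 𝔓, IsProbabilityMeasure P)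
    (𝒳 : Set (Ω → ℝ)) (h𝒳L0 : IsL0Set 𝔓 𝒳) (h𝒳conv : Convex ℝ 𝒳)
    (𝒞 : Set (Ω → ℝ)) (h𝒞ne : 𝒞.Nonempty) (h𝒞𝒳 : 𝒞 ⊆ 𝒳)
    (𝒬 : Set (Measure Ω)) (hred : IsReductionSet 𝔓 𝒬 𝒞)
    (𝒴 : Measure Ω → Set ((Ω → ℝ) → EReal))
    (h𝒴ne : ∀ Q ∈ 𝒬, (𝒴 Q).Nonempty)
    (h𝒴inv : ∀ Q ∈ 𝒬, ∀ l ∈ 𝒴 Q, ∀ f ∈ jSat Q 𝒳, ∀ g ∈ jSat Q 𝒳,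
        f =ᵐ[Q] g → l f = l g)
    (hbip : ∀ Q ∈ 𝒬,
        jSat Q 𝒞 = {f | f ∈ jSat Q 𝒳 ∧
          ∀ l ∈ 𝒴 Q, (∀ g ∈ jSat Q 𝒞, l g ≤ 1) → l f ≤ 1}) :
    𝒞 = {f | f ∈ 𝒳 ∧
      ∀ Q ∈ 𝒬, ∀ l ∈ 𝒴 Q, (∀ g ∈ jSat Q 𝒞, l g ≤ 1) → l f ≤ 1} :=
  stmt3_general 𝔓 𝒳 h𝒳L0 𝒞 h𝒞𝒳 𝒬 hred 𝒴 hbip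

end Robust
end

section
/- Suppose 𝒞 ⊂ L⁰_c is 𝒫-sensitive with reduction set 𝒬 ⊂ 𝔓_c(Ω). If 𝒞 is locally Q-closed for every Q ∈ 𝒬, then 𝒞 is 𝒬-closed. If in addition 𝒞 is solid, then 𝒞 is locally Q-closed for every Q ∈ 𝒬 if and only if 𝒞 is 𝒬-closed. -/
open MeasureTheory Filter Set
open scoped ENNReal

namespace Robust

variable {Ω : Type*} [MeasurableSpace Ω]

/-! A limit in `Q`-probability of a sequence in `𝒞` lies in every `j_Q⁻¹ (j_Q 𝒞)` with `Q ∈ 𝒬`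
as soon as `𝒞` is locally `Q`-closed, hence in `𝒞` by the reduction-set identity.
Conversely, a sequence converging in `Q`-probability has a `Q`-a.s. convergent subsequence;
cut down to the measurable set where it converges, it stays in `𝒞` by solidity and converges
everywhere, hence in `Q'`-probability for every `Q' ∈ 𝒬`. Its limit lies in `𝒞` by
`𝒬`-closedness and agrees `Q`-a.s. with the original limit. -/

open scoped Topology

lemma tendsto_indicator_setOf_exists_tendsto {α β ι : Type*} [TopologicalSpace β] [Zero β]
    (l : Filter ι) (Z : ι → α → β) (a : α) :
    Tendsto (fun i => {x | ∃ c, Tendsto (Z · x) l (𝓝 c)}.indicator (Z i) a) l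
      (𝓝 ({x | ∃ c, Tendsto (Z · x) l (𝓝 c)}.indicator (fun x => limUnder l (Z · x)) a)) := by
  by_cases ha : a ∈ {x | ∃ c, Tendsto (Z · x) l (𝓝 c)}
  · simpa only [Set.indicator_of_mem ha] using tendsto_nhds_limUnder ha
  · simpa only [Set.indicator_of_notMem ha] using tendsto_const_nhds

lemma Solid.indicator_mem {𝔓 : Set (Measure Ω)} {𝒞 : Set (Ω → ℝ)} (hsol : Solid 𝔓 𝒞)
    {f : Ω → ℝ} (hf : f ∈ 𝒞) (hfm : Measurable f) {A : Set Ω} (hA : MeasurableSet A) :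
    A.indicator f ∈ 𝒞 := by
  rcases hsol with hsol | ⟨hpos, hsol⟩
  · refine hsol f hf _ (hfm.indicator hA) fun P _ => ae_of_all _ fun ω => ?_
    simpa only [Real.norm_eq_abs] using norm_indicator_le_norm_self f ω
  · have hf0 := (hpos hf).2
    refine hsol f hf _ ⟨hfm.indicator hA, fun P hP => ?_⟩ fun P hP => ?_
    · filter_upwards [hf0 P hP] with ω hω using Set.indicator_nonneg (fun _ _ => hω) ω
    · filter_upwards [hf0 P hP] with ω hω using Set.indicator_le_self' (fun _ _ => hω) ω

lemma qClosedSet_of_locallyQClosed {𝒬 : Set (Measure Ω)} {𝒞 : Set (Ω → ℝ)}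
    (hred : 𝒞 = ⋂ Q ∈ 𝒬, jSat Q 𝒞) (hloc : ∀ Q ∈ 𝒬, LocallyQClosed Q 𝒞) :
    QClosedSet 𝒬 𝒞 := by
  intro X x hX hx hconv
  rw [hred]
  exact Set.mem_iInter₂.2 fun Q hQ => ⟨hx, hloc Q hQ X x hX hx (hconv Q hQ)⟩

lemma locallyQClosed_of_qClosedSet {𝔓 𝒬 : Set (Measure Ω)} {𝒞 : Set (Ω → ℝ)}
    (h𝒞 : 𝒞 ⊆ L0 Ω) (hsol : Solid 𝔓 𝒞) (h𝒬 : ∀ Q' ∈ 𝒬, IsFiniteMeasure Q')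
    (hclosed : QClosedSet 𝒬 𝒞) (Q : Measure Ω) : LocallyQClosed Q 𝒞 := by
  intro X x hX _ hXx
  obtain ⟨ns, -, hae⟩ := hXx.exists_seq_tendsto_ae
  set Z : ℕ → Ω → ℝ := fun k => X (ns k)
  have hZm : ∀ k, Measurable (Z k) := fun k => h𝒞 (hX (ns k))
  set A := {ω | ∃ c, Tendsto (Z · ω) atTop (𝓝 c)}
  have hA : MeasurableSet A := measurableSet_exists_tendsto hZm
  set y := A.indicator fun ω => limUnder atTop (Z · ω)
  have hy : ∀ ω, Tendsto (fun k => A.indicator (Z k) ω) atTop (𝓝 (y ω)) :=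
    tendsto_indicator_setOf_exists_tendsto atTop Z
  have hym : Measurable y :=
    measurable_of_tendsto_metrizable (fun k => (hZm k).indicator hA) (tendsto_pi_nhds.2 hy)
  have hyC : y ∈ 𝒞 := by
    refine hclosed _ y (fun k => hsol.indicator_mem (hX (ns k)) (hZm k) hA) hym fun Q' hQ' => ?_
    have := h𝒬 Q' hQ'
    exact tendstoInMeasure_of_tendsto_ae
      (fun k => ((hZm k).indicator hA).aestronglyMeasurable) (ae_of_all _ hy)
  refine ⟨y, hyC, ?_⟩
  filter_upwards [hae] with ω hω
  have hωA : ω ∈ A := ⟨x ω, hω⟩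
  refine tendsto_nhds_unique hω ?_
  simpa only [Set.indicator_of_mem hωA] using hy ω

theorem stmt5_general {Ω : Type*} [MeasurableSpace Ω]
    (𝔓 : Set (Measure Ω))
    (𝒞 : Set (Ω → ℝ)) (h𝒞 : IsL0Set 𝔓 𝒞)
    (𝒬 : Set (Measure Ω)) (hred : IsReductionSet 𝔓 𝒬 𝒞) :
    ((∀ Q ∈ 𝒬, LocallyQClosed Q 𝒞) → QClosedSet 𝒬 𝒞) ∧
    (Solid 𝔓 𝒞 → ((∀ Q ∈ 𝒬, LocallyQClosed Q 𝒞) ↔ QClosedSet 𝒬 𝒞)) := by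
  obtain ⟨-, h𝒬, hreduce⟩ := hred
  have hfinite : ∀ Q ∈ 𝒬, IsFiniteMeasure Q := fun Q hQ =>
    have := (h𝒬 hQ).1
    inferInstance
  have hlocal := qClosedSet_of_locallyQClosed hreduce
  exact ⟨hlocal, fun hsol => ⟨hlocal, fun hclosed Q _ =>
    locallyQClosed_of_qClosedSet h𝒞.1 hsol hfinite hclosed Q⟩⟩

/-- Local `Q`-closedness for all `Q ∈ 𝒬` versus `𝒬`-closedness. -/
theorem stmt5 {Ω : Type*} [MeasurableSpace Ω]
    (𝔓 : Set (Measure Ω)) (h𝔓ne : 𝔓.Nonempty)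
    (h𝔓prob : ∀ P ∈ 𝔓, IsProbabilityMeasure P)
    (𝒞 : Set (Ω → ℝ)) (h𝒞 : IsL0Set 𝔓 𝒞)
    (𝒬 : Set (Measure Ω)) (hred : IsReductionSet 𝔓 𝒬 𝒞) :
    ((∀ Q ∈ 𝒬, LocallyQClosed Q 𝒞) → QClosedSet 𝒬 𝒞) ∧
    (Solid 𝔓 𝒞 → ((∀ Q ∈ 𝒬, LocallyQClosed Q 𝒞) ↔ QClosedSet 𝒬 𝒞)) :=
  stmt5_general 𝔓 𝒞 h𝒞 𝒬 hred
end Robust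
end

section
/- Suppose 𝒞 ⊂ L⁰_c is non-empty, solid, and sequentially order closed, and let Q ∈ 𝔓_c(Ω). Then j_Q(𝒞) is order closed with respect to the Q-a.s. order in L⁰_Q. -/
open MeasureTheory Filter Set
open scoped ENNReal

namespace Robust

variable {Ω : Type*} [MeasurableSpace Ω]

/-!
Since `Q` is finite, the `Q`-integrals of the truncations `min Yₐ 1` of the dominating family
of an order null net approach their infimum along an increasing sequence of indices, and the
pointwise infimum along that sequence is then a `Q`-a.s. lower bound of the whole family, hence
`0`. So a subsequence of the net converges `Q`-a.s., and so do representatives `gₙ ∈ 𝒞` of its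
terms. On the measurable set where they converge to `x` (intersected with `{0 ≤ x}` for the
positive cone, still of full measure because `Q ≪ 𝔓`) the clamps `max (-|gₙ|) (min x |gₙ|)` lie
in `𝒞` by solidity and converge to `x` at every point; off that set, after replacing `x` by `0`,
they vanish. Convergence at every point is order convergence in `L⁰_c`, so this modification of
`x` lies in `𝒞`.
-/

open scoped Topology

theorem exists_monotone_forall_le {ι : Type*} [Preorder ι] [IsDirectedOrder ι] (b : ℕ → ι) :
    ∃ s : ℕ → ι, Monotone s ∧ ∀ n, b n ≤ s n := by
  choose c hleft hright using exists_ge_ge (α := ι)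
  let s : ℕ → ι := fun n => Nat.rec (b 0) (fun n sn => c sn (b (n + 1))) n
  refine ⟨s, monotone_nat_of_le_succ fun n => hleft _ _, fun n => ?_⟩
  cases n with
  | zero => exact le_rfl
  | succ n => exact hright _ _

theorem tendsto_iSup_add_of_tendsto {u : ℕ → ℝ} {c : ℝ} (hu : Tendsto u atTop (𝓝 c)) :
    Tendsto (fun n => ⨆ k, u (k + n)) atTop (𝓝 c) := by
  have hbdd : ∀ n, BddAbove (range fun k => u (k + n)) := fun n =>
    (hu.comp (tendsto_add_atTop_nat n)).bddAbove_range
  refine tendsto_order.2 ⟨fun a ha => (hu.eventually (lt_mem_nhds ha)).mono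
    fun n hn => hn.trans_le (le_ciSup_of_le (hbdd n) 0 (by rw [zero_add])), fun b hb => ?_⟩
  obtain ⟨b', hcb', hb'b⟩ := exists_between hb
  obtain ⟨N, hN⟩ := eventually_atTop.1 (hu.eventually (gt_mem_nhds hcb'))
  exact eventually_atTop.2 ⟨N, fun n hn =>
    (ciSup_le fun k => (hN (k + n) (by omega)).le).trans_lt hb'b⟩

theorem abs_max_neg_min_le {b : ℝ} (hb : 0 ≤ b) (t : ℝ) : |max (-b) (min t b)| ≤ b :=
  abs_le.2 ⟨le_max_left _ _, max_le (neg_le_self hb) (min_le_right _ _)⟩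

theorem tendsto_max_neg_abs_min_indicator {α : Type*} {g : ℕ → α → ℝ} {x : α → ℝ}
    {A : Set α} (hgx : ∀ ω ∈ A, Tendsto (fun n => g n ω) atTop (𝓝 (x ω))) (ω : α) :
    Tendsto (fun n => max (-|g n ω|) (min (A.indicator x ω) |g n ω|)) atTop
      (𝓝 (A.indicator x ω)) := by
  by_cases hω : ω ∈ A
  · have hlim := (hgx ω hω).abs
    rw [indicator_of_mem hω]
    convert hlim.neg.max (tendsto_const_nhds.min hlim) using 2
    rw [min_eq_left (le_abs_self _), max_eq_right (neg_abs_le _)]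
  · simp [indicator_of_notMem hω]

section

variable {𝔓 : Set (Measure Ω)} {𝒞 : Set (Ω → ℝ)}

theorem qsLe_of_forall_le {f g : Ω → ℝ} (h : ∀ ω, f ω ≤ g ω) : QSLe 𝔓 f g :=
  fun _ _ => Eventually.of_forall h

theorem AC.ae_le {Q : Measure Ω} (hQ : AC 𝔓 Q) {f g : Ω → ℝ} (hf : Measurable f)
    (hg : Measurable g) (h : QSLe 𝔓 f g) : f ≤ᵐ[Q] g := by
  refine ae_iff.2 (hQ _ ?_ fun P hP => ae_iff.1 (h P hP))
  simpa only [not_le] using measurableSet_lt hg hf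

theorem seqOrderConv_of_tendsto (𝔓 : Set (Measure Ω)) {G : ℕ → Ω → ℝ} {y : Ω → ℝ}
    (hG : ∀ n, Measurable (G n)) (hy : Measurable y)
    (hGy : ∀ ω, Tendsto (fun n => G n ω) atTop (𝓝 (y ω))) : SeqOrderConv 𝔓 G y := by
  set D : ℕ → Ω → ℝ := fun n ω => |G n ω - y ω|
  have hD : ∀ ω, Tendsto (fun n => D n ω) atTop (𝓝 0) := fun ω => by
    simpa using ((hGy ω).sub_const (y ω)).abs
  have hbdd : ∀ n ω, BddAbove (range fun k => D (k + n) ω) := fun n ω =>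
    ((hD ω).comp (tendsto_add_atTop_nat n)).bddAbove_range
  refine ⟨fun n ω => ⨆ k, D (k + n) ω, fun n => .iSup fun k => ((hG _).sub hy).abs,
    fun m n hmn => qsLe_of_forall_le fun ω => ?_,
    ⟨fun n => qsLe_of_forall_le fun ω => le_ciSup_of_le (hbdd n ω) 0 (abs_nonneg _), ?_⟩,
    fun n => qsLe_of_forall_le fun ω => le_ciSup_of_le (hbdd n ω) 0 (by rw [zero_add])⟩
  · refine ciSup_le fun k => le_ciSup_of_le (hbdd m ω) (k + (n - m)) ?_
    rw [show k + (n - m) + m = k + n by omega]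
  · intro w _ hw P hP
    filter_upwards [ae_all_iff.2 fun n => hw n P hP] with ω hω
    exact ge_of_tendsto' (tendsto_iSup_add_of_tendsto (hD ω)) hω

theorem SeqOrderClosed.mem_of_tendsto (hclosed : SeqOrderClosed 𝔓 𝒞) (h𝒞 : 𝒞 ⊆ L0 Ω)
    {G : ℕ → Ω → ℝ} {y : Ω → ℝ} (hG : ∀ n, G n ∈ 𝒞) (hy : Measurable y)
    (hGy : ∀ ω, Tendsto (fun n => G n ω) atTop (𝓝 (y ω))) : y ∈ 𝒞 :=
  hclosed G y hG hy (seqOrderConv_of_tendsto 𝔓 (fun n => h𝒞 (hG n)) hy hGy)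

theorem SolidL0.exists_mem_ae_eq_of_tendsto_ae (hsolid : SolidL0 𝔓 𝒞) (h𝒞 : 𝒞 ⊆ L0 Ω)
    (hclosed : SeqOrderClosed 𝔓 𝒞) {Q : Measure Ω} {g : ℕ → Ω → ℝ} (hg : ∀ n, g n ∈ 𝒞)
    {x : Ω → ℝ} (hx : Measurable x)
    (hgx : ∀ᵐ ω ∂Q, Tendsto (fun n => g n ω) atTop (𝓝 (x ω))) : ∃ f ∈ 𝒞, x =ᵐ[Q] f := by
  set A := {ω | Tendsto (fun n => g n ω) atTop (𝓝 (x ω))}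
  have hA : MeasurableSet A := measurableSet_tendsto_fun (fun n => h𝒞 (hg n)) hx
  refine ⟨A.indicator x, hclosed.mem_of_tendsto h𝒞 (fun n => ?_) (hx.indicator hA)
    (tendsto_max_neg_abs_min_indicator fun ω hω => hω), ?_⟩
  · have hgn : Measurable (g n) := h𝒞 (hg n)
    exact hsolid (g n) (hg n) _ (hgn.abs.neg.max ((hx.indicator hA).min hgn.abs))
      (qsLe_of_forall_le fun ω => abs_max_neg_min_le (abs_nonneg _) _)
  · filter_upwards [hgx] with ω hω
    rw [indicator_of_mem hω]

theorem SolidPos.exists_mem_ae_eq_of_tendsto_ae (hsolid : SolidPos 𝔓 𝒞)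
    (hclosed : SeqOrderClosed 𝔓 𝒞) {Q : Measure Ω} (hQ : AC 𝔓 Q) {g : ℕ → Ω → ℝ}
    (hg : ∀ n, g n ∈ 𝒞) {x : Ω → ℝ} (hx : Measurable x)
    (hgx : ∀ᵐ ω ∂Q, Tendsto (fun n => g n ω) atTop (𝓝 (x ω))) : ∃ f ∈ 𝒞, x =ᵐ[Q] f := by
  have h𝒞 : 𝒞 ⊆ L0 Ω := fun f hf => (hsolid.1 hf).1
  have hgn : ∀ n, Measurable (g n) := fun n => h𝒞 (hg n)
  have hx0 : ∀ᵐ ω ∂Q, 0 ≤ x ω := by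
    filter_upwards [hgx, ae_all_iff.2 fun n => hQ.ae_le measurable_const (hgn n)
      (hsolid.1 (hg n)).2] with ω hω hω0
    exact ge_of_tendsto' hω hω0
  set A := {ω | Tendsto (fun n => g n ω) atTop (𝓝 (x ω))} ∩ {ω | 0 ≤ x ω}
  have hA : MeasurableSet A :=
    (measurableSet_tendsto_fun hgn hx).inter (measurableSet_le measurable_const hx)
  have hA0 : ∀ ω, 0 ≤ A.indicator x ω := indicator_nonneg fun ω hω => hω.2
  refine ⟨A.indicator x, hclosed.mem_of_tendsto h𝒞 (fun n => ?_) (hx.indicator hA)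
    (tendsto_max_neg_abs_min_indicator fun ω hω => hω.1), ?_⟩
  · refine hsolid.2 (g n) (hg n) _ ⟨(hgn n).abs.neg.max ((hx.indicator hA).min (hgn n).abs),
      qsLe_of_forall_le fun ω => le_max_of_le_right (le_min (hA0 ω) (abs_nonneg _))⟩
      fun P hP => ?_
    filter_upwards [(hsolid.1 (hg n)).2 P hP] with ω hω
    exact (le_abs_self _).trans
      ((abs_max_neg_min_le (abs_nonneg _) _).trans_eq (abs_of_nonneg hω))
  · filter_upwards [hgx, hx0] with ω hω hω0
    rw [indicator_of_mem (show ω ∈ A from ⟨hω, hω0⟩)]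

theorem Solid.exists_mem_ae_eq_of_tendsto_ae (hsolid : Solid 𝔓 𝒞) (h𝒞 : 𝒞 ⊆ L0 Ω)
    (hclosed : SeqOrderClosed 𝔓 𝒞) {Q : Measure Ω} (hQ : AC 𝔓 Q) {g : ℕ → Ω → ℝ}
    (hg : ∀ n, g n ∈ 𝒞) {x : Ω → ℝ} (hx : Measurable x)
    (hgx : ∀ᵐ ω ∂Q, Tendsto (fun n => g n ω) atTop (𝓝 (x ω))) : ∃ f ∈ 𝒞, x =ᵐ[Q] f :=
  hsolid.elim (fun hs => hs.exists_mem_ae_eq_of_tendsto_ae h𝒞 hclosed hg hx hgx)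
    fun hs => hs.exists_mem_ae_eq_of_tendsto_ae hclosed hQ hg hx hgx

theorem exists_monotone_iInf_ae_le {Q : Measure Ω} [IsFiniteMeasure Q] {ι : Type*}
    [Preorder ι] [IsDirectedOrder ι] [Nonempty ι] {V : ι → Ω → ℝ} (hV : ∀ a, Measurable (V a))
    (hV0 : ∀ a ω, 0 ≤ V a ω) (hV1 : ∀ a ω, V a ω ≤ 1)
    (hanti : ∀ a b, a ≤ b → V b ≤ᵐ[Q] V a) :
    ∃ s : ℕ → ι, Monotone s ∧ ∀ a, (fun ω => ⨅ n, V (s n) ω) ≤ᵐ[Q] V a := by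
  have hint : ∀ a, Integrable (V a) Q := fun a =>
    .of_bound (hV a).aestronglyMeasurable 1 (Eventually.of_forall fun ω => by
      rw [Real.norm_eq_abs, abs_of_nonneg (hV0 a ω)]; exact hV1 a ω)
  set E : ι → ℝ := fun a => ∫ ω, V a ω ∂Q
  have hEbdd : BddBelow (range E) := ⟨0, forall_mem_range.2 fun a => integral_nonneg (hV0 a)⟩
  set c := sInf (range E)
  have hcE : ∀ a, c ≤ E a := fun a => csInf_le hEbdd (mem_range_self a)
  obtain ⟨u, -, hu, hmem⟩ := exists_seq_tendsto_sInf (range_nonempty E) hEbdd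
  choose b hb using hmem
  obtain ⟨s, hs, hbs⟩ := exists_monotone_forall_le b
  have hEs : Tendsto (fun n => E (s n) - c) atTop (𝓝 0) := by
    refine tendsto_sub_nhds_zero_iff.2 (tendsto_of_tendsto_of_tendsto_of_le_of_le
      tendsto_const_nhds hu (fun n => hcE _) fun n => ?_)
    rw [← hb n]
    exact integral_mono_ae (hint _) (hint _) (hanti _ _ (hbs n))
  refine ⟨s, hs, fun a => ?_⟩
  set h := fun ω => ⨅ n, V (s n) ω
  have hh : ∀ n ω, h ω ≤ V (s n) ω := fun n ω =>
    ciInf_le ⟨0, forall_mem_range.2 fun n => hV0 _ ω⟩ n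
  set F := fun ω => max (h ω - V a ω) 0
  have hF : ∀ ω, 0 ≤ F ω := fun ω => le_max_right _ _
  have hFint : Integrable F Q := (hint (s 0)).mono' ((Measurable.iInf fun n => hV (s n)).sub
    (hV a) |>.max measurable_const).aestronglyMeasurable (Eventually.of_forall fun ω => by
      rw [Real.norm_eq_abs, abs_of_nonneg (hF ω)]
      exact max_le (by linarith [hh 0 ω, hV0 a ω]) (hV0 _ ω))
  have hFle : ∀ n, ∫ ω, F ω ∂Q ≤ E (s n) - c := by
    intro n
    obtain ⟨d, had, hsd⟩ := exists_ge_ge a (s n)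
    calc ∫ ω, F ω ∂Q ≤ ∫ ω, (V (s n) ω - V d ω) ∂Q := by
          refine integral_mono_ae hFint ((hint _).sub (hint _)) ?_
          filter_upwards [hanti _ _ had, hanti _ _ hsd] with ω h1 h2
          exact max_le (by linarith [hh n ω]) (by linarith)
      _ = E (s n) - E d := integral_sub (hint _) (hint _)
      _ ≤ E (s n) - c := by linarith [hcE d]
  have hF0 : F =ᵐ[Q] 0 := (integral_eq_zero_iff_of_nonneg hF hFint).1
    (le_antisymm (ge_of_tendsto' hEs hFle) (integral_nonneg hF))
  filter_upwards [hF0] with ω hω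
  exact sub_nonpos.1 (max_eq_right_iff.1 hω)

theorem exists_seq_tendsto_ae_zero_of_isQSInf {Q : Measure Ω} [IsFiniteMeasure Q] {ι : Type*}
    [Preorder ι] [IsDirectedOrder ι] [Nonempty ι] {Y : ι → Ω → ℝ} (hY : ∀ a, Measurable (Y a))
    (hanti : ∀ a b, a ≤ b → Y b ≤ᵐ[Q] Y a) (hinf : IsQSInf {Q} Y fun _ => 0) :
    ∃ s : ℕ → ι, ∀ᵐ ω ∂Q, Tendsto (fun n => Y (s n) ω) atTop (𝓝 0) := by
  have hY0 : ∀ a, ∀ᵐ ω ∂Q, 0 ≤ Y a ω := fun a => hinf.1 a Q rfl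
  -- Truncation at `1` makes the family integrable and keeps `0` as its `Q`-a.s. infimum.
  set V : ι → Ω → ℝ := fun a ω => min (max (Y a ω) 0) 1
  obtain ⟨s, hs, hle⟩ := exists_monotone_iInf_ae_le (V := V)
    (fun a => ((hY a).max measurable_const).min measurable_const)
    (fun a ω => le_min (le_max_right _ _) zero_le_one) (fun a ω => min_le_right _ _)
    fun a b hab => (hanti a b hab).mono fun ω hω => min_le_min_right _ (max_le_max_right _ hω)
  set h := fun ω => ⨅ n, V (s n) ω
  have hh0 : h ≤ᵐ[Q] 0 := by
    refine hinf.2 h (Measurable.iInf fun n => ((hY _).max measurable_const).min measurable_const)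
      (fun a P hP => ?_) Q rfl
    rw [mem_singleton_iff.1 hP]
    filter_upwards [hle a, hY0 a] with ω h1 h2
    exact h1.trans ((min_le_left _ _).trans_eq (max_eq_left h2))
  refine ⟨s, ?_⟩
  filter_upwards [hh0, ae_all_iff.2 fun n => hY0 (s n),
    ae_all_iff.2 fun n => hanti _ _ (hs (Nat.le_succ n))] with ω hω hY0ω hantiω
  have hVbdd : BddBelow (range fun n => V (s n) ω) :=
    ⟨0, forall_mem_range.2 fun n => le_min (le_max_right _ _) zero_le_one⟩
  have hV : Tendsto (fun n => V (s n) ω) atTop (𝓝 0) := by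
    convert tendsto_atTop_ciInf (antitone_nat_of_succ_le fun n =>
      min_le_min_right _ (max_le_max_right _ (hantiω n))) hVbdd
    exact le_antisymm (le_ciInf fun n => le_min (le_max_right _ _) zero_le_one) hω
  refine hV.congr' ((hV.eventually (gt_mem_nhds zero_lt_one)).mono fun n hn => ?_)
  show min (max (Y (s n) ω) 0) 1 = Y (s n) ω
  rw [min_eq_left ((min_lt_iff.1 hn).resolve_right (lt_irrefl 1)).le, max_eq_left (hY0ω n)]

end

theorem stmt7_general {Ω : Type*} [MeasurableSpace Ω]
    (𝔓 : Set (Measure Ω))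
    (𝒞 : Set (Ω → ℝ)) (h𝒞L0 : IsL0Set 𝔓 𝒞)
    (hsolid : Solid 𝔓 𝒞) (hclosed : SeqOrderClosed 𝔓 𝒞)
    (Q : Measure Ω) (hQ : Q ∈ PC 𝔓) :
    OrderClosed {Q} (jSat Q 𝒞) := by
  rintro ι _ _ _ X x hX hx ⟨Y, hY, hanti, hinf, hdom⟩
  have := hQ.1
  obtain ⟨s, hYs⟩ :=
    exists_seq_tendsto_ae_zero_of_isQSInf hY (fun a b hab => hanti a b hab Q rfl) hinf
  choose g hg hXg using fun n => (hX (s n)).2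
  have hgx : ∀ᵐ ω ∂Q, Tendsto (fun n => g n ω) atTop (𝓝 (x ω)) := by
    filter_upwards [hYs, ae_all_iff.2 fun n => hdom (s n) Q rfl, ae_all_iff.2 hXg]
      with ω hYω hdomω hXω
    refine tendsto_iff_dist_tendsto_zero.2
      (squeeze_zero (fun n => dist_nonneg) (fun n => ?_) hYω)
    rw [Real.dist_eq, ← hXω n]
    exact hdomω n
  obtain ⟨f, hf, hxf⟩ := hsolid.exists_mem_ae_eq_of_tendsto_ae h𝒞L0.1 hclosed hQ.2 hg hx hgx
  exact ⟨hx, f, hf, hxf⟩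

/-- If `𝒞` is solid and sequentially order closed, then `j_Q(𝒞)` is
order closed w.r.t. the `Q`-a.s. order in `L⁰_Q`. -/
theorem stmt7 {Ω : Type*} [MeasurableSpace Ω]
    (𝔓 : Set (Measure Ω)) (h𝔓ne : 𝔓.Nonempty)
    (h𝔓prob : ∀ P ∈ 𝔓, IsProbabilityMeasure P)
    (𝒞 : Set (Ω → ℝ)) (h𝒞L0 : IsL0Set 𝔓 𝒞) (h𝒞ne : 𝒞.Nonempty)
    (hsolid : Solid 𝔓 𝒞) (hclosed : SeqOrderClosed 𝔓 𝒞)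
    (Q : Measure Ω) (hQ : Q ∈ PC 𝔓) :
    OrderClosed {Q} (jSat Q 𝒞) :=
  stmt7_general 𝔓 𝒞 h𝒞L0 hsolid hclosed Q hQ

end Robust
end

section
/- Let 𝒬 ⊂ 𝔓_c(Ω) be non-empty, let † be one of the quantifiers ∃ or ∀, and suppose 𝒞 = ⋂_{Q∈𝒬} {X ∈ L⁰_c : † H ∈ ℋ : Q(A^H_Q(X)) = 1}, where ℋ is a non-empty index set and for each Q ∈ 𝒬 and H ∈ ℋ the map A^H_Q : L⁰_c → ℱ satisfies Q(A^H_Q(X) △ A^H_Q(Y)) = 0 whenever Q(X = Y) = 1. Then 𝒞 is 𝒫-sensitive with reduction set 𝒬. -/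
open MeasureTheory Filter Set
open scoped ENNReal

namespace Robust

variable {Ω : Type*} [MeasurableSpace Ω]

/-! Each set `{X | † H, Q (A^H_Q X) = 1}` is saturated under `Q`-a.s. equality, because
`Q (A^H_Q X)` depends only on the `Q`-class of `X`. Hence `j_Q⁻¹ (j_Q 𝒞)` lies in that set for
every `Q ∈ 𝒬`, and intersecting over `𝒬` gives back `𝒞`. -/

theorem jSat_mono {Q : Measure Ω} {S T : Set (Ω → ℝ)} (hST : S ⊆ T) : jSat Q S ⊆ jSat Q T :=
  fun _ ⟨hf, g, hg, hfg⟩ => ⟨hf, g, hST hg, hfg⟩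

theorem subset_biInter_jSat {𝒬 : Set (Measure Ω)} {𝒞 : Set (Ω → ℝ)} (h𝒞 : 𝒞 ⊆ L0 Ω) :
    𝒞 ⊆ ⋂ Q ∈ 𝒬, jSat Q 𝒞 :=
  fun f hf => mem_iInter₂.mpr fun _ _ => ⟨h𝒞 hf, f, hf, EventuallyEq.rfl⟩

theorem isReductionSet_of_eq_biInter {𝔓 𝒬 : Set (Measure Ω)} {𝒞 : Set (Ω → ℝ)}
    {S : Measure Ω → Set (Ω → ℝ)} (h𝒬ne : 𝒬.Nonempty) (h𝒬 : 𝒬 ⊆ PC 𝔓)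
    (hS : ∀ Q ∈ 𝒬, S Q ⊆ L0 Ω) (hSsat : ∀ Q ∈ 𝒬, jSat Q (S Q) ⊆ S Q)
    (h𝒞 : 𝒞 = ⋂ Q ∈ 𝒬, S Q) : IsReductionSet 𝔓 𝒬 𝒞 := by
  obtain ⟨Q₀, hQ₀⟩ := h𝒬ne
  have h𝒞S : ∀ Q ∈ 𝒬, 𝒞 ⊆ S Q := fun Q hQ => h𝒞 ▸ biInter_subset_of_mem hQ
  refine ⟨⟨Q₀, hQ₀⟩, h𝒬, (subset_biInter_jSat ((h𝒞S Q₀ hQ₀).trans (hS Q₀ hQ₀))).antisymm ?_⟩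
  rw [h𝒞]
  exact iInter₂_mono fun Q hQ => (jSat_mono (h𝒞 ▸ h𝒞S Q hQ)).trans (hSsat Q hQ)

theorem jSat_setOf_measure_subset {Q : Measure Ω} {H : Type*} {A : H → (Ω → ℝ) → Set Ω}
    (hA : ∀ (h : H) (f g : Ω → ℝ), Measurable f → Measurable g →
      f =ᵐ[Q] g → Q (symmDiff (A h f) (A h g)) = 0)
    (P : (H → ℝ≥0∞) → Prop) :
    jSat Q {f | Measurable f ∧ P fun h => Q (A h f)} ⊆
      {f | Measurable f ∧ P fun h => Q (A h f)} := by
  rintro f ⟨hf, g, ⟨hg, hPg⟩, hfg⟩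
  have hQA : (fun h => Q (A h f)) = fun h => Q (A h g) :=
    funext fun h => measure_congr (measure_symmDiff_eq_zero_iff.mp (hA h f g hf hg hfg))
  exact ⟨hf, hQA ▸ hPg⟩

theorem stmt12_general {Ω : Type*} [MeasurableSpace Ω]
    (𝔓 : Set (Measure Ω))
    (𝒬 : Set (Measure Ω)) (h𝒬ne : 𝒬.Nonempty) (h𝒬 : 𝒬 ⊆ PC 𝔓)
    (H : Type*)
    (A : Measure Ω → H → (Ω → ℝ) → Set Ω)
    (hAcong : ∀ Q ∈ 𝒬, ∀ (h : H) (f g : Ω → ℝ), Measurable f → Measurable g →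
        f =ᵐ[Q] g → Q (symmDiff (A Q h f) (A Q h g)) = 0)
    (𝒞 : Set (Ω → ℝ))
    (h𝒞 : (𝒞 = ⋂ Q ∈ 𝒬, {f | Measurable f ∧ ∃ h : H, Q (A Q h f) = 1}) ∨
          (𝒞 = ⋂ Q ∈ 𝒬, {f | Measurable f ∧ ∀ h : H, Q (A Q h f) = 1})) :
    IsReductionSet 𝔓 𝒬 𝒞 := by
  have hsat (P : (H → ℝ≥0∞) → Prop) (Q : Measure Ω) (hQ : Q ∈ 𝒬) :=
    jSat_setOf_measure_subset (hAcong Q hQ) P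
  rcases h𝒞 with h𝒞 | h𝒞
  · exact isReductionSet_of_eq_biInter h𝒬ne h𝒬 (fun _ _ _ hf => hf.1)
      (hsat fun m => ∃ h, m h = 1) h𝒞
  · exact isReductionSet_of_eq_biInter h𝒬ne h𝒬 (fun _ _ _ hf => hf.1)
      (hsat fun m => ∀ h, m h = 1) h𝒞

/-- `𝒫`-sensitivity from local defining conditions
(with quantifier `† ∈ {∃, ∀}`). -/
theorem stmt12 {Ω : Type*} [MeasurableSpace Ω]
    (𝔓 : Set (Measure Ω)) (h𝔓ne : 𝔓.Nonempty)
    (h𝔓prob : ∀ P ∈ 𝔓, IsProbabilityMeasure P)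
    (𝒬 : Set (Measure Ω)) (h𝒬ne : 𝒬.Nonempty) (h𝒬 : 𝒬 ⊆ PC 𝔓)
    (H : Type*) (hH : Nonempty H)
    (A : Measure Ω → H → (Ω → ℝ) → Set Ω)
    (hAmeas : ∀ Q ∈ 𝒬, ∀ (h : H) (f : Ω → ℝ), MeasurableSet (A Q h f))
    (hAcong : ∀ Q ∈ 𝒬, ∀ (h : H) (f g : Ω → ℝ), Measurable f → Measurable g →
        f =ᵐ[Q] g → Q (symmDiff (A Q h f) (A Q h g)) = 0)
    (𝒞 : Set (Ω → ℝ))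
    (h𝒞 : (𝒞 = ⋂ Q ∈ 𝒬, {f | Measurable f ∧ ∃ h : H, Q (A Q h f) = 1}) ∨
          (𝒞 = ⋂ Q ∈ 𝒬, {f | Measurable f ∧ ∀ h : H, Q (A Q h f) = 1})) :
    IsReductionSet 𝔓 𝒬 𝒞 :=
  stmt12_general 𝔓 𝒬 h𝒬ne h𝒬 H A hAcong 𝒞 h𝒞
end Robust
end
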